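/- The function F_CLT(u) = log(1+u) + u/(1+u) − (1/2)·log(1+2u) − u/(1+2u) is strictly increasing on [0, ∞), satisfies F_CLT(0) = 0, and tends to +∞ as u → ∞. Consequently, for every α > 0 there is a unique u_CLT(α) > 0 with F_CLT(u_CLT(α)) = α, and hence a unique bandwidth h_CLT(α) = u_CLT(α)^{−1/2} > 0 solving F_CLT(1/h²) = α; moreover α ↦ h_CLT(α) is strictly decreasing. -/

import Mathlib

/-! The derivative of `F_CLT` is `u (2u² + 6u + 3) / ((1 + u)² (1 + 2u)²)`, positive for `u > 0`,
so `F_CLT` increases from `F_CLT 0 = 0`; since `1 + 2u ≤ 2 (1 + u)`, `F_CLT u` is at least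
`(log (1 + u) - log 2) / 2`, which tends to `∞`. By the intermediate value theorem every `α > 0`
has exactly one preimage `u > 0`, and as `h ↦ 1 / h²` is a decreasing bijection of `(0, ∞)`,
exactly one bandwidth `h = u^{-1/2}`, which decreases as `α` grows. -/

open Filter

/-- The function whose equation `F_CLT(1/h²) = α` defines the CLT-transition
bandwidth for standard Gaussian data with a Gaussian kernel. -/
noncomputable def FCLT (u : ℝ) : ℝ :=
  Real.log (1 + u) + u / (1 + u) - (1 / 2) * Real.log (1 + 2 * u) - u / (1 + 2 * u)

open Set

theorem StrictMonoOn.existsUnique_gt_eq {f : ℝ → ℝ} {a α : ℝ}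
    (hmono : StrictMonoOn f (Ici a)) (hcont : ContinuousOn f (Ici a))
    (htop : Tendsto f atTop atTop) (hα : f a < α) :
    ∃! u, a < u ∧ f u = α := by
  obtain ⟨u, hau, hfu⟩ := isPreconnected_Ici.intermediate_value_Ici self_mem_Ici
    (le_principal_iff.2 (Ici_mem_atTop a)) hcont htop hα.le
  have hu : a < u := lt_of_le_of_ne hau (by rintro rfl; exact hα.ne hfu)
  refine ⟨u, ⟨hu, hfu⟩, fun v ⟨hv, hfv⟩ => ?_⟩
  exact hmono.injOn (mem_Ici.2 hv.le) hau (hfv.trans hfu.symm)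

theorem strictAntiOn_one_div_sq : StrictAntiOn (fun h : ℝ => 1 / h ^ 2) (Ioi 0) :=
  fun _ ha _ _ hab =>
    one_div_lt_one_div_of_lt (pow_pos ha 2) (pow_lt_pow_left₀ hab (le_of_lt ha) two_ne_zero)

theorem hasDerivAt_FCLT {x : ℝ} (h₁ : 1 + x ≠ 0) (h₂ : 1 + 2 * x ≠ 0) :
    HasDerivAt FCLT (x * (2 * x ^ 2 + 6 * x + 3) / ((1 + x) ^ 2 * (1 + 2 * x) ^ 2)) x := by
  have d₁ : HasDerivAt (fun u : ℝ => 1 + u) 1 x := (hasDerivAt_id x).const_add 1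
  have d₂ : HasDerivAt (fun u : ℝ => 1 + 2 * u) (2 * 1) x :=
    ((hasDerivAt_id x).const_mul 2).const_add 1
  refine ((((d₁.log h₁).add ((hasDerivAt_id x).div d₁ h₁)).sub
    ((d₂.log h₂).const_mul (1 / 2))).sub ((hasDerivAt_id x).div d₂ h₂)).congr_deriv ?_
  -- `field_simp` rewrites `1 + 2 * x` as `1 + x * 2` before looking for its nonvanishing
  have h₂' : 1 + x * 2 ≠ 0 := by rwa [mul_comm]
  rw [id]
  field_simp
  ring

theorem continuousOn_FCLT : ContinuousOn FCLT (Ici 0) := fun x (hx : 0 ≤ x) =>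
  (hasDerivAt_FCLT (by positivity) (by positivity)).continuousAt.continuousWithinAt

theorem strictMonoOn_FCLT : StrictMonoOn FCLT (Ici 0) := by
  refine strictMonoOn_of_deriv_pos (convex_Ici 0) continuousOn_FCLT fun x hx => ?_
  rw [interior_Ici] at hx
  have hx : 0 < x := hx
  rw [(hasDerivAt_FCLT (by positivity) (by positivity)).deriv]
  positivity

theorem FCLT_zero : FCLT 0 = 0 := by simp [FCLT]

theorem log_sub_log_two_div_two_le_FCLT {u : ℝ} (hu : 0 ≤ u) :
    (Real.log (1 + u) - Real.log 2) / 2 ≤ FCLT u := by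
  have hdiv : u / (1 + 2 * u) ≤ u / (1 + u) :=
    div_le_div_of_nonneg_left hu (by positivity) (by linarith)
  have hlog : Real.log (1 + 2 * u) ≤ Real.log 2 + Real.log (1 + u) := by
    rw [← Real.log_mul two_ne_zero (by positivity)]
    exact Real.log_le_log (by positivity) (by linarith)
  unfold FCLT
  linarith

theorem tendsto_FCLT_atTop : Tendsto FCLT atTop atTop := by
  have hlog : Tendsto (fun u : ℝ => (Real.log (1 + u) - Real.log 2) / 2) atTop atTop :=
    (tendsto_atTop_add_const_right _ _ (Real.tendsto_log_atTop.comp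
      (tendsto_atTop_add_const_left _ 1 tendsto_id))).atTop_div_const two_pos
  exact tendsto_atTop_mono' _
    (eventually_atTop.2 ⟨0, fun _ hu => log_sub_log_two_div_two_le_FCLT hu⟩) hlog

theorem strictAntiOn_FCLT_one_div_sq :
    StrictAntiOn (fun h : ℝ => FCLT (1 / h ^ 2)) (Ioi 0) :=
  strictMonoOn_FCLT.comp_strictAntiOn strictAntiOn_one_div_sq fun h _ =>
    mem_Ici.2 (one_div_nonneg.2 (sq_nonneg h))

theorem clt_transition_existence_uniqueness :
    StrictMonoOn FCLT (Set.Ici (0 : ℝ))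
      ∧ FCLT 0 = 0
      ∧ Tendsto FCLT atTop atTop
      ∧ (∀ α : ℝ, 0 < α → ∃! u : ℝ, 0 < u ∧ FCLT u = α)
      ∧ (∀ α : ℝ, 0 < α → ∃! h : ℝ, 0 < h ∧ FCLT (1 / h ^ 2) = α)
      ∧ (∀ α₁ α₂ h₁ h₂ : ℝ, 0 < α₁ → α₁ < α₂ → 0 < h₁ → 0 < h₂ →
          FCLT (1 / h₁ ^ 2) = α₁ → FCLT (1 / h₂ ^ 2) = α₂ → h₂ < h₁) := by
  have hu (α : ℝ) (hα : 0 < α) : ∃! u : ℝ, 0 < u ∧ FCLT u = α :=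
    strictMonoOn_FCLT.existsUnique_gt_eq continuousOn_FCLT tendsto_FCLT_atTop
      (by rwa [FCLT_zero])
  refine ⟨strictMonoOn_FCLT, FCLT_zero, tendsto_FCLT_atTop, hu, fun α hα => ?_, ?_⟩
  · obtain ⟨u, ⟨hu₀, rfl⟩, -⟩ := hu α hα
    have hsq : 1 / (1 / √u) ^ 2 = u := by
      rw [one_div_pow, one_div_one_div, Real.sq_sqrt hu₀.le]
    refine ⟨1 / √u, ⟨by positivity, by rw [hsq]⟩, fun h ⟨hh, hfh⟩ => ?_⟩
    exact strictAntiOn_FCLT_one_div_sq.injOn hh (by positivity : (0 : ℝ) < 1 / √u)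
      (by simp only [hfh, hsq])
  · rintro α₁ α₂ h₁ h₂ - hlt hh₁ hh₂ rfl rfl
    exact (strictAntiOn_FCLT_one_div_sq.lt_iff_gt hh₁ hh₂).1 hlt
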